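/- Assume ρ̃'(M) < ∞ and let λ* = ρ̃(M). Then there exist a unit vector x₀ ∈ ℝ^d and a switching sequence σ₀ such that |x_{σ₀,x₀}(t)| ≤ λ*ᵗ |x₀| for all t ∈ ℕ (i.e., the stabilization rate λ* is attained with constant M = 1 for some initial point). -/

import Mathlib

/-!
Fix `μ > λ*` and any nonzero `x`. Since `ρ̃(x) ≤ λ* < μ`, some trajectory from `x` satisfies
`|x(t)| ≤ D μᵗ`, so `g(t) = |x(t)| / μᵗ` is bounded. Restarting at a time `s` where `g` is within a
factor `1 + ε` of its supremum and normalising `x(s)` gives a unit vector whose shifted trajectory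
obeys `|y(t)| ≤ (1 + ε) μᵗ`. Letting `μ ↓ λ*` and `ε ↓ 0`, a limit point of these unit vectors and
switching sequences (compactness of the sphere and of `Mᴺ`, continuity of `traj` in both) attains the
rate `λ*` with constant `1`.
-/

open Matrix Filter Topology

noncomputable section

/-- Discrete-time switched trajectory: x(t) = A_{σ(t)} ⋯ A_{σ(1)} x. -/
def traj {d : ℕ} (σ : ℕ → Matrix (Fin d) (Fin d) ℝ) (x : EuclideanSpace ℝ (Fin d)) :
    ℕ → EuclideanSpace ℝ (Fin d)
  | 0 => x
  | t + 1 => (WithLp.toLp 2 ((σ (t + 1)).mulVec (traj σ x t)) : EuclideanSpace ℝ (Fin d))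

/-- Pointwise stabilization radius at x. -/
def stabRadAt {d : ℕ} (M : Set (Matrix (Fin d) (Fin d) ℝ)) (x : EuclideanSpace ℝ (Fin d)) : ℝ :=
  sInf {lam : ℝ | 0 ≤ lam ∧ ∃ σ : ℕ → Matrix (Fin d) (Fin d) ℝ, (∀ t, σ t ∈ M) ∧
    ∃ C > 0, ∀ t : ℕ, ‖traj σ x t‖ ≤ C * lam ^ t * ‖x‖}

/-- Pointwise stabilization radius. -/
def stabRad {d : ℕ} (M : Set (Matrix (Fin d) (Fin d) ℝ)) : ℝ :=
  ⨆ x : EuclideanSpace ℝ (Fin d), stabRadAt M x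

/-- The set of products of exactly t matrices from M. -/
def prodSet {d : ℕ} (M : Set (Matrix (Fin d) (Fin d) ℝ)) (t : ℕ) :
    Set (Matrix (Fin d) (Fin d) ℝ) :=
  {P | ∃ A : Fin t → Matrix (Fin d) (Fin d) ℝ, (∀ i, A i ∈ M) ∧ P = (List.ofFn A).prod}

instance Matrix.instFirstCountableTopology {d : ℕ} :
    FirstCountableTopology (Matrix (Fin d) (Fin d) ℝ) :=
  inferInstanceAs (FirstCountableTopology (Fin d → Fin d → ℝ))

theorem exists_forall_le_one_add_mul_of_bddAbove {f : ℕ → ℝ} (hf : BddAbove (Set.range f))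
    (hf0 : 0 < f 0) {ε : ℝ} (hε : 0 < ε) : ∃ s, 0 < f s ∧ ∀ n, f n ≤ (1 + ε) * f s := by
  have hsup : 0 < ⨆ n, f n := hf0.trans_le (le_ciSup hf 0)
  obtain ⟨s, hs⟩ := exists_lt_of_lt_ciSup (div_lt_self hsup (by linarith : 1 < 1 + ε))
  rw [div_lt_iff₀ (by linarith)] at hs
  refine ⟨s, pos_of_mul_pos_left (hsup.trans hs) (by linarith), fun n => ?_⟩
  linarith [le_ciSup hf n]

section Trajectory

variable {d : ℕ}

theorem traj_smul (σ : ℕ → Matrix (Fin d) (Fin d) ℝ) (c : ℝ) (x : EuclideanSpace ℝ (Fin d)) :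
    ∀ t, traj σ (c • x) t = c • traj σ x t
  | 0 => rfl
  | t + 1 => by
    simp only [traj, traj_smul σ c x t, WithLp.ofLp_smul, Matrix.mulVec_smul, WithLp.toLp_smul]

theorem traj_add (σ : ℕ → Matrix (Fin d) (Fin d) ℝ) (x : EuclideanSpace ℝ (Fin d)) (s : ℕ) :
    ∀ t, traj σ x (s + t) = traj (fun u => σ (s + u)) (traj σ x s) t
  | 0 => rfl
  | t + 1 => by rw [← add_assoc, traj, traj, traj_add σ x s t, add_assoc]

theorem continuous_traj (t : ℕ) :
    Continuous fun p : EuclideanSpace ℝ (Fin d) × (ℕ → Matrix (Fin d) (Fin d) ℝ) =>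
      traj p.2 p.1 t := by
  induction t with
  | zero => exact continuous_fst
  | succ t ih =>
    exact (PiLp.continuous_toLp 2 _).comp <| Continuous.matrix_mulVec
      ((continuous_apply (t + 1)).comp continuous_snd) ((PiLp.continuous_ofLp 2 _).comp ih)

theorem exists_unit_traj_le_one_add_mul_pow {σ : ℕ → Matrix (Fin d) (Fin d) ℝ}
    {x : EuclideanSpace ℝ (Fin d)} (hx : x ≠ 0) {μ D : ℝ} (hμ : 0 < μ)
    (hD : ∀ t, ‖traj σ x t‖ ≤ D * μ ^ t) {ε : ℝ} (hε : 0 < ε) :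
    ∃ s, ∃ y : EuclideanSpace ℝ (Fin d), ‖y‖ = 1 ∧
      ∀ t, ‖traj (fun u => σ (s + u)) y t‖ ≤ (1 + ε) * μ ^ t := by
  set g : ℕ → ℝ := fun t => ‖traj σ x t‖ / μ ^ t
  have hg : BddAbove (Set.range g) :=
    ⟨D, by rintro _ ⟨t, rfl⟩; exact (div_le_iff₀ (pow_pos hμ t)).2 (hD t)⟩
  obtain ⟨s, hgs, hmax⟩ :=
    exists_forall_le_one_add_mul_of_bddAbove hg (by simpa [g, traj] using hx) hε
  have hxs : 0 < ‖traj σ x s‖ := by simpa [g, div_pos_iff_of_pos_right (pow_pos hμ s)] using hgs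
  refine ⟨s, ‖traj σ x s‖⁻¹ • traj σ x s, by simp [norm_smul, hxs.ne'], fun t => ?_⟩
  have h := hmax (s + t)
  simp only [g, pow_add] at h
  rw [div_le_iff₀ (by positivity)] at h
  rw [traj_smul, ← traj_add, norm_smul, norm_inv, norm_norm, inv_mul_le_iff₀ hxs]
  calc ‖traj σ x (s + t)‖ ≤ (1 + ε) * (‖traj σ x s‖ / μ ^ s) * (μ ^ s * μ ^ t) := h
    _ = ‖traj σ x s‖ * ((1 + ε) * μ ^ t) := by field_simp

theorem exists_traj_le_of_tendsto {M : Set (Matrix (Fin d) (Fin d) ℝ)} (hM : IsCompact M)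
    {y : ℕ → EuclideanSpace ℝ (Fin d)} (hy : ∀ n, ‖y n‖ = 1)
    {σ : ℕ → ℕ → Matrix (Fin d) (Fin d) ℝ} (hσ : ∀ n t, σ n t ∈ M) {b : ℕ → ℕ → ℝ}
    (hb : ∀ n t, ‖traj (σ n) (y n) t‖ ≤ b n t) {β : ℕ → ℝ}
    (hβ : ∀ t, Tendsto (fun n => b n t) atTop (𝓝 (β t))) :
    ∃ x₀ : EuclideanSpace ℝ (Fin d), ‖x₀‖ = 1 ∧ ∃ σ₀ : ℕ → Matrix (Fin d) (Fin d) ℝ,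
      (∀ t, σ₀ t ∈ M) ∧ ∀ t, ‖traj σ₀ x₀ t‖ ≤ β t := by
  have hK := (isCompact_sphere (0 : EuclideanSpace ℝ (Fin d)) 1).prod
    (isCompact_univ_pi fun _ : ℕ => hM)
  obtain ⟨⟨x₀, σ₀⟩, ⟨hx₀, hσ₀⟩, φ, hφ, hlim⟩ :=
    hK.tendsto_subseq (x := fun n => (y n, σ n)) fun n =>
      ⟨mem_sphere_zero_iff_norm.2 (hy n), fun t _ => hσ n t⟩
  refine ⟨x₀, mem_sphere_zero_iff_norm.1 hx₀, σ₀, fun t => hσ₀ t trivial, fun t => ?_⟩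
  exact le_of_tendsto_of_tendsto' (((continuous_traj t).tendsto _).comp hlim).norm
    ((hβ t).comp hφ.tendsto_atTop) fun n => hb (φ n) t

end Trajectory

section StabilizationRadius

variable {d : ℕ} {M : Set (Matrix (Fin d) (Fin d) ℝ)}

def stabRates (M : Set (Matrix (Fin d) (Fin d) ℝ)) (x : EuclideanSpace ℝ (Fin d)) : Set ℝ :=
  {lam : ℝ | 0 ≤ lam ∧ ∃ σ : ℕ → Matrix (Fin d) (Fin d) ℝ, (∀ t, σ t ∈ M) ∧
    ∃ C > 0, ∀ t : ℕ, ‖traj σ x t‖ ≤ C * lam ^ t * ‖x‖}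

theorem stabRadAt_eq_sInf_stabRates (x : EuclideanSpace ℝ (Fin d)) :
    stabRadAt M x = sInf (stabRates M x) := rfl

theorem stabRad_nonneg : 0 ≤ stabRad M :=
  Real.iSup_nonneg fun _ => Real.sInf_nonneg fun _ h => h.1

theorem stabRadAt_le_stabRad {lam : ℝ} (hlam : ∀ x, lam ∈ stabRates M x)
    (x : EuclideanSpace ℝ (Fin d)) : stabRadAt M x ≤ stabRad M :=
  le_ciSup ⟨lam, by rintro _ ⟨y, rfl⟩; exact csInf_le ⟨0, fun _ h => h.1⟩ (hlam y)⟩ x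

theorem exists_traj_le_of_stabRad_lt {lam : ℝ} (hlam : ∀ x, lam ∈ stabRates M x) {μ : ℝ}
    (hμ : stabRad M < μ) (x : EuclideanSpace ℝ (Fin d)) :
    ∃ σ : ℕ → Matrix (Fin d) (Fin d) ℝ, (∀ t, σ t ∈ M) ∧ ∃ D, ∀ t, ‖traj σ x t‖ ≤ D * μ ^ t := by
  have hx : sInf (stabRates M x) < μ :=
    stabRadAt_eq_sInf_stabRates x ▸ (stabRadAt_le_stabRad hlam x).trans_lt hμ
  obtain ⟨ν, ⟨hν, σ, hσ, C, hC, hbound⟩, hνμ⟩ := exists_lt_of_csInf_lt ⟨lam, hlam x⟩ hx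
  refine ⟨σ, hσ, C * ‖x‖, fun t => (hbound t).trans ?_⟩
  calc C * ν ^ t * ‖x‖ = C * ‖x‖ * ν ^ t := by ring
    _ ≤ C * ‖x‖ * μ ^ t := by gcongr

theorem exists_unit_traj_le_of_stabRad_lt (hd : 0 < d) {lam : ℝ}
    (hlam : ∀ x, lam ∈ stabRates M x) {μ : ℝ} (hμ : stabRad M < μ) {ε : ℝ} (hε : 0 < ε) :
    ∃ y : EuclideanSpace ℝ (Fin d), ‖y‖ = 1 ∧ ∃ σ : ℕ → Matrix (Fin d) (Fin d) ℝ,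
      (∀ t, σ t ∈ M) ∧ ∀ t, ‖traj σ y t‖ ≤ (1 + ε) * μ ^ t := by
  have hx : EuclideanSpace.single (⟨0, hd⟩ : Fin d) (1 : ℝ) ≠ 0 := by simp
  obtain ⟨σ, hσ, D, hD⟩ := exists_traj_le_of_stabRad_lt hlam hμ (EuclideanSpace.single _ 1)
  obtain ⟨s, y, hy, hbound⟩ :=
    exists_unit_traj_le_one_add_mul_pow hx (stabRad_nonneg.trans_lt hμ) hD hε
  exact ⟨y, hy, fun u => σ (s + u), fun u => hσ (s + u), hbound⟩

end StabilizationRadius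

theorem stmt18_general {d : ℕ} (hd : 0 < d) (M : Set (Matrix (Fin d) (Fin d) ℝ))
    (hM : IsCompact M)
    (hfin : ∃ lam C : ℝ, 0 ≤ lam ∧ 0 < C ∧
      ∀ x : EuclideanSpace ℝ (Fin d), ∃ σ : ℕ → Matrix (Fin d) (Fin d) ℝ,
        (∀ t, σ t ∈ M) ∧ ∀ t : ℕ, ‖traj σ x t‖ ≤ C * lam ^ t * ‖x‖) :
    ∃ x₀ : EuclideanSpace ℝ (Fin d), ‖x₀‖ = 1 ∧
      ∃ σ₀ : ℕ → Matrix (Fin d) (Fin d) ℝ, (∀ t, σ₀ t ∈ M) ∧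
        ∀ t : ℕ, ‖traj σ₀ x₀ t‖ ≤ stabRad M ^ t * ‖x₀‖ := by
  obtain ⟨lam, C, hlam, hC, hall⟩ := hfin
  have hrates : ∀ x, lam ∈ stabRates M x := fun x =>
    let ⟨σ, hσ, hbound⟩ := hall x
    ⟨hlam, σ, hσ, C, hC, hbound⟩
  set δ : ℕ → ℝ := fun n => 1 / (n + 1)
  have hδ : Tendsto δ atTop (𝓝 0) := tendsto_one_div_add_atTop_nhds_zero_nat
  choose y hy σ hσ hbound using fun n =>
    exists_unit_traj_le_of_stabRad_lt hd hrates (μ := stabRad M + δ n)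
      (lt_add_of_pos_right _ Nat.one_div_pos_of_nat) (ε := δ n) Nat.one_div_pos_of_nat
  obtain ⟨x₀, hx₀, σ₀, hσ₀, hlim⟩ := exists_traj_le_of_tendsto hM hy hσ hbound
    (β := fun t => stabRad M ^ t) fun t => by
      simpa using ((tendsto_const_nhds (x := (1 : ℝ))).add hδ).mul
        (((tendsto_const_nhds (x := stabRad M)).add hδ).pow t)
  exact ⟨x₀, hx₀, σ₀, hσ₀, fun t => by simpa [hx₀] using hlim t⟩

/-- if ρ̃'(M) < ∞, i.e. there are λ ≥ 0 and a uniform constant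
C > 0 such that every initial point admits a trajectory with
|x(t)| ≤ C λᵗ |x|, then the rate λ* = ρ̃(M) is attained with constant 1 for
some unit initial vector: there exist x₀ with ‖x₀‖ = 1 and a switching
sequence σ₀ with |x_{σ₀,x₀}(t)| ≤ λ*ᵗ |x₀| for all t. -/
theorem stmt18 {d : ℕ} (hd : 0 < d) (M : Set (Matrix (Fin d) (Fin d) ℝ))
    (hM : IsCompact M) (hne : M.Nonempty)
    (hfin : ∃ lam C : ℝ, 0 ≤ lam ∧ 0 < C ∧
      ∀ x : EuclideanSpace ℝ (Fin d), ∃ σ : ℕ → Matrix (Fin d) (Fin d) ℝ,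
        (∀ t, σ t ∈ M) ∧ ∀ t : ℕ, ‖traj σ x t‖ ≤ C * lam ^ t * ‖x‖) :
    ∃ x₀ : EuclideanSpace ℝ (Fin d), ‖x₀‖ = 1 ∧
      ∃ σ₀ : ℕ → Matrix (Fin d) (Fin d) ℝ, (∀ t, σ₀ t ∈ M) ∧
        ∀ t : ℕ, ‖traj σ₀ x₀ t‖ ≤ stabRad M ^ t * ‖x₀‖ :=
  stmt18_general hd M hM hfin
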